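/- arXiv:math/9909165 — 2 statements merged into one kernel-verified Lean document; each statement's English description precedes it below -/
import Mathlib

section
/- The theta constants θ1(τ) = ∑_{n∈ℤ} q^{(1/2)(n+1/2)^2}, θ2(τ) = ∑_{n∈ℤ} (-1)^n q^{n^2/2}, θ3(τ) = ∑_{n∈ℤ} q^{n^2/2} (with q = e^{2πiτ}, Im τ > 0) satisfy the Jacobi identity θ3(τ)^4 = θ1(τ)^4 + θ2(τ)^4. -/
open Complex

/-- `θ1(τ) = ∑_{n∈ℤ} q^{(1/2)(n+1/2)^2}` with `q = e^{2πiτ}`. -/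
noncomputable def theta1 (τ : ℂ) : ℂ :=
  ∑' n : ℤ, Complex.exp (Real.pi * I * τ * ((n : ℂ) + 1/2) ^ 2)

/-- `θ2(τ) = ∑_{n∈ℤ} (-1)^n q^{n^2/2}`. -/
noncomputable def theta2 (τ : ℂ) : ℂ :=
  ∑' n : ℤ, (-1 : ℂ) ^ n * Complex.exp (Real.pi * I * τ * (n : ℂ) ^ 2)

/-- `θ3(τ) = ∑_{n∈ℤ} q^{n^2/2}`. -/
noncomputable def theta3 (τ : ℂ) : ℂ :=
  ∑' n : ℤ, Complex.exp (Real.pi * I * τ * (n : ℂ) ^ 2)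

private lemma sumnorm_theta_term (z : ℂ) {τ : ℂ} (hτ : 0 < τ.im) :
    Summable fun n : ℤ => ‖jacobiTheta₂_term n z τ‖ := by
  apply Summable.of_nonneg_of_le (fun n => norm_nonneg _)
    (norm_jacobiTheta₂_term_le hτ (le_refl |z.im|) le_rfl)
  simpa using summable_pow_mul_jacobiTheta₂_term_bound |z.im| hτ 0

private lemma f3_eq (τ : ℂ) (n : ℤ) :
    cexp (↑Real.pi * I * τ * (n : ℂ)^2) = jacobiTheta₂_term n 0 τ := by
  rw [jacobiTheta₂_term]; congr 1; ring

private lemma f1_eq (τ : ℂ) (n : ℤ) :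
    cexp (↑Real.pi * I * τ * ((n : ℂ)+1/2)^2)
      = cexp (↑Real.pi * I * τ / 4) * jacobiTheta₂_term n (τ/2) τ := by
  rw [jacobiTheta₂_term, ← Complex.exp_add]; congr 1; ring

private lemma sumnorm3 {τ : ℂ} (hτ : 0 < τ.im) :
    Summable fun n : ℤ => ‖cexp (↑Real.pi * I * τ * (n : ℂ)^2)‖ := by
  simp_rw [f3_eq]; exact sumnorm_theta_term 0 hτ

private lemma sumnorm1 {τ : ℂ} (hτ : 0 < τ.im) :
    Summable fun n : ℤ => ‖cexp (↑Real.pi * I * τ * ((n : ℂ)+1/2)^2)‖ := by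
  simp_rw [f1_eq, norm_mul]
  exact (sumnorm_theta_term (τ/2) hτ).mul_left _

private lemma sumnorm2 {τ : ℂ} (hτ : 0 < τ.im) :
    Summable fun n : ℤ => ‖(-1:ℂ)^n * cexp (↑Real.pi * I * τ * (n : ℂ)^2)‖ := by
  have h : ∀ n : ℤ, ‖(-1:ℂ)^n * cexp (↑Real.pi * I * τ * (n : ℂ)^2)‖
      = ‖cexp (↑Real.pi * I * τ * (n : ℂ)^2)‖ := by
    intro n; rw [norm_mul, norm_zpow]; simp
  simp_rw [h]; exact sumnorm3 hτ

private lemma pow4_tsum {f : ℤ → ℂ} (hf : Summable fun n => ‖f n‖) :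
    (∑' n : ℤ, f n) ^ 4
      = ∑' P : (ℤ×ℤ)×(ℤ×ℤ), f P.1.1 * f P.1.2 * (f P.2.1 * f P.2.2) := by
  have h2 : (∑' n : ℤ, f n) * (∑' n : ℤ, f n) = ∑' p : ℤ×ℤ, f p.1 * f p.2 :=
    tsum_mul_tsum_of_summable_norm hf hf
  have h2n : Summable fun p : ℤ×ℤ => ‖f p.1 * f p.2‖ := hf.mul_norm hf
  calc (∑' n : ℤ, f n) ^ 4
      = ((∑' n : ℤ, f n) * (∑' n : ℤ, f n)) * ((∑' n : ℤ, f n) * (∑' n : ℤ, f n)) := by ring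
    _ = (∑' p : ℤ×ℤ, f p.1 * f p.2) * (∑' p : ℤ×ℤ, f p.1 * f p.2) := by rw [h2]
    _ = ∑' P : (ℤ×ℤ)×(ℤ×ℤ), (f P.1.1 * f P.1.2) * (f P.2.1 * f P.2.2) :=
      tsum_mul_tsum_of_summable_norm h2n h2n

/-- integral-lattice summand -/
private noncomputable def Eint (τ : ℂ) (P : (ℤ×ℤ)×(ℤ×ℤ)) : ℂ :=
  cexp (↑Real.pi * I * τ *
    ((P.1.1:ℂ)^2 + (P.1.2:ℂ)^2 + (P.2.1:ℂ)^2 + (P.2.2:ℂ)^2))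

/-- half-integral-lattice summand -/
private noncomputable def Ehalf (τ : ℂ) (P : (ℤ×ℤ)×(ℤ×ℤ)) : ℂ :=
  cexp (↑Real.pi * I * τ *
    (((P.1.1:ℂ)+1/2)^2 + ((P.1.2:ℂ)+1/2)^2 + ((P.2.1:ℂ)+1/2)^2 + ((P.2.2:ℂ)+1/2)^2))

private def sg (P : (ℤ×ℤ)×(ℤ×ℤ)) : ℤ := P.1.1 + P.1.2 + P.2.1 + P.2.2

private lemma sign_add (a b : ℤ) : (-1:ℂ)^(a+b) = (-1:ℂ)^a * (-1:ℂ)^b :=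
  zpow_add₀ (by norm_num) a b

private lemma Eint_eq (τ : ℂ) (P : (ℤ×ℤ)×(ℤ×ℤ)) :
    Eint τ P = cexp (↑Real.pi * I * τ * (P.1.1:ℂ)^2) * cexp (↑Real.pi * I * τ * (P.1.2:ℂ)^2)
      * (cexp (↑Real.pi * I * τ * (P.2.1:ℂ)^2) * cexp (↑Real.pi * I * τ * (P.2.2:ℂ)^2)) := by
  rw [Eint]; simp only [← Complex.exp_add]; congr 1; ring

private lemma Ehalf_eq (τ : ℂ) (P : (ℤ×ℤ)×(ℤ×ℤ)) :
    Ehalf τ P = cexp (↑Real.pi * I * τ * ((P.1.1:ℂ)+1/2)^2)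
      * cexp (↑Real.pi * I * τ * ((P.1.2:ℂ)+1/2)^2)
      * (cexp (↑Real.pi * I * τ * ((P.2.1:ℂ)+1/2)^2)
      * cexp (↑Real.pi * I * τ * ((P.2.2:ℂ)+1/2)^2)) := by
  rw [Ehalf]; simp only [← Complex.exp_add]; congr 1; ring

private def SOdd : Set ((ℤ×ℤ)×(ℤ×ℤ)) := {P | Odd (sg P)}

/-- sign flip involution swapping parity classes -/
private def psiEquiv : (SOddᶜ : Set ((ℤ×ℤ)×(ℤ×ℤ))) ≃ (SOdd : Set ((ℤ×ℤ)×(ℤ×ℤ))) where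
  toFun P := ⟨((P.1.1.1, P.1.1.2), (P.1.2.1, -P.1.2.2 - 1)), by
    have h := P.2
    simp only [SOdd, sg, Set.mem_compl_iff, Set.mem_setOf_eq, Int.odd_iff] at h ⊢
    omega⟩
  invFun P := ⟨((P.1.1.1, P.1.1.2), (P.1.2.1, -P.1.2.2 - 1)), by
    have h := P.2
    simp only [SOdd, sg, Set.mem_compl_iff, Set.mem_setOf_eq, Int.odd_iff] at h ⊢
    omega⟩
  left_inv P := by
    apply Subtype.ext
    obtain ⟨⟨⟨a, b⟩, ⟨c, d⟩⟩, h⟩ := P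
    simp only [Prod.mk.injEq, true_and, and_true]
    omega
  right_inv P := by
    apply Subtype.ext
    obtain ⟨⟨⟨a, b⟩, ⟨c, d⟩⟩, h⟩ := P
    simp only [Prod.mk.injEq, true_and, and_true]
    omega

/-- the Hadamard-type bijection from the even class to the odd class -/
private def phiEquiv : (SOddᶜ : Set ((ℤ×ℤ)×(ℤ×ℤ))) ≃ (SOdd : Set ((ℤ×ℤ)×(ℤ×ℤ))) where
  toFun P := ⟨(((P.1.1.1 + P.1.1.2 + P.1.2.1 + P.1.2.2 + 2)/2,
               (P.1.1.1 + P.1.1.2 - P.1.2.1 - P.1.2.2)/2),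
              ((P.1.1.1 - P.1.1.2 + P.1.2.1 - P.1.2.2)/2,
               (P.1.1.1 - P.1.1.2 - P.1.2.1 + P.1.2.2)/2)), by
    have h := P.2
    simp only [SOdd, sg, Set.mem_compl_iff, Set.mem_setOf_eq, Int.odd_iff] at h ⊢
    omega⟩
  invFun P := ⟨(((P.1.1.1 + P.1.1.2 + P.1.2.1 + P.1.2.2 - 1)/2,
               (P.1.1.1 + P.1.1.2 - P.1.2.1 - P.1.2.2 - 1)/2),
              ((P.1.1.1 - P.1.1.2 + P.1.2.1 - P.1.2.2 - 1)/2,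
               (P.1.1.1 - P.1.1.2 - P.1.2.1 + P.1.2.2 - 1)/2)), by
    have h := P.2
    simp only [SOdd, sg, Set.mem_compl_iff, Set.mem_setOf_eq, Int.odd_iff] at h ⊢
    omega⟩
  left_inv P := by
    apply Subtype.ext
    obtain ⟨⟨⟨a, b⟩, ⟨c, d⟩⟩, h⟩ := P
    simp only [SOdd, sg, Set.mem_compl_iff, Set.mem_setOf_eq, Int.odd_iff] at h
    simp only [Prod.mk.injEq, true_and, and_true]
    omega
  right_inv P := by
    apply Subtype.ext
    obtain ⟨⟨⟨a, b⟩, ⟨c, d⟩⟩, h⟩ := P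
    simp only [SOdd, sg, Set.mem_setOf_eq, Int.odd_iff] at h
    simp only [Prod.mk.injEq, true_and, and_true]
    omega

private lemma cast_half_int {k m : ℤ} (hk : 2 * k = m) : (k : ℂ) = (m : ℂ) / 2 := by
  have h := congrArg (Int.cast : ℤ → ℂ) hk
  push_cast at h
  linear_combination h / 2

/-- key quadratic identity for the Hadamard map -/
private lemma phi_arg {n1 n2 n3 n4 : ℤ} (h : ¬ Odd (n1+n2+n3+n4)) :
    ((((n1+n2+n3+n4+2)/2 : ℤ) : ℂ))^2 + (((n1+n2-n3-n4)/2 : ℤ) : ℂ)^2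
      + (((n1-n2+n3-n4)/2 : ℤ) : ℂ)^2 + (((n1-n2-n3+n4)/2 : ℤ) : ℂ)^2
    = ((n1:ℂ)+1/2)^2 + ((n2:ℂ)+1/2)^2 + ((n3:ℂ)+1/2)^2 + ((n4:ℂ)+1/2)^2 := by
  rw [Int.odd_iff] at h
  have c1 := cast_half_int (m := n1+n2+n3+n4+2) (k := (n1+n2+n3+n4+2)/2) (by omega)
  have c2 := cast_half_int (m := n1+n2-n3-n4) (k := (n1+n2-n3-n4)/2) (by omega)
  have c3 := cast_half_int (m := n1-n2+n3-n4) (k := (n1-n2+n3-n4)/2) (by omega)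
  have c4 := cast_half_int (m := n1-n2-n3+n4) (k := (n1-n2-n3+n4)/2) (by omega)
  rw [c1, c2, c3, c4]
  push_cast
  ring

/-- Jacobi's identity `θ3^4 = θ1^4 + θ2^4`. -/
theorem jacobi_identity (τ : ℂ) (hτ : 0 < τ.im) :
    theta3 τ ^ 4 = theta1 τ ^ 4 + theta2 τ ^ 4 := by
  classical
  -- norm-summability of the four-fold products
  have hEn : Summable fun P : (ℤ×ℤ)×(ℤ×ℤ) => ‖Eint τ P‖ := by
    refine (((sumnorm3 hτ).mul_norm (sumnorm3 hτ)).mul_norm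
      ((sumnorm3 hτ).mul_norm (sumnorm3 hτ))).congr fun P => ?_
    rw [← Eint_eq]
  have hE : Summable fun P : (ℤ×ℤ)×(ℤ×ℤ) => Eint τ P := hEn.of_norm
  have hsgE : Summable fun P : (ℤ×ℤ)×(ℤ×ℤ) => (-1:ℂ)^(sg P) * Eint τ P := by
    refine Summable.of_norm (.congr (((sumnorm2 hτ).mul_norm (sumnorm2 hτ)).mul_norm
      ((sumnorm2 hτ).mul_norm (sumnorm2 hτ))) fun P => ?_)
    rw [Eint_eq, sg, sign_add, sign_add, sign_add]
    simp only [norm_mul]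
    ring
  have hEHn : Summable fun P : (ℤ×ℤ)×(ℤ×ℤ) => ‖Ehalf τ P‖ := by
    refine (((sumnorm1 hτ).mul_norm (sumnorm1 hτ)).mul_norm
      ((sumnorm1 hτ).mul_norm (sumnorm1 hτ))).congr fun P => ?_
    rw [← Ehalf_eq]
  have hEH : Summable fun P : (ℤ×ℤ)×(ℤ×ℤ) => Ehalf τ P := hEHn.of_norm
  -- power expansions
  have h3 : theta3 τ ^ 4 = ∑' P : (ℤ×ℤ)×(ℤ×ℤ), Eint τ P := by
    rw [theta3, pow4_tsum (sumnorm3 hτ)]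
    exact tsum_congr fun P => (Eint_eq τ P).symm
  have h1 : theta1 τ ^ 4 = ∑' P : (ℤ×ℤ)×(ℤ×ℤ), Ehalf τ P := by
    rw [theta1, pow4_tsum (sumnorm1 hτ)]
    exact tsum_congr fun P => (Ehalf_eq τ P).symm
  have h2 : theta2 τ ^ 4 = ∑' P : (ℤ×ℤ)×(ℤ×ℤ), (-1:ℂ)^(sg P) * Eint τ P := by
    rw [theta2, pow4_tsum (sumnorm2 hτ)]
    refine tsum_congr fun P => ?_
    rw [Eint_eq, sg, sign_add, sign_add, sign_add]
    ring
  -- θ3^4 - θ2^4 as a sum over the odd class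
  have key1 : theta3 τ ^ 4 - theta2 τ ^ 4
      = ∑' P : (ℤ×ℤ)×(ℤ×ℤ), (1 - (-1:ℂ)^(sg P)) * Eint τ P := by
    rw [h3, h2, ← Summable.tsum_sub hE hsgE]
    exact tsum_congr fun P => by ring
  have key2 : (∑' P : (ℤ×ℤ)×(ℤ×ℤ), (1 - (-1:ℂ)^(sg P)) * Eint τ P)
      = ∑' P : (SOdd : Set ((ℤ×ℤ)×(ℤ×ℤ))), (1 - (-1:ℂ)^(sg (P:((ℤ×ℤ)×(ℤ×ℤ))))) * Eint τ P := by
    refine (tsum_subtype_eq_of_support_subset fun P hP => ?_).symm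
    simp only [Function.mem_support, ne_eq] at hP
    by_contra hmem
    simp only [SOdd, Set.mem_setOf_eq] at hmem
    rw [Int.not_odd_iff_even] at hmem
    exact hP (by rw [hmem.neg_one_zpow]; ring)
  have key3 : (∑' P : (SOdd : Set ((ℤ×ℤ)×(ℤ×ℤ))), (1 - (-1:ℂ)^(sg (P:((ℤ×ℤ)×(ℤ×ℤ))))) * Eint τ P)
      = 2 * ∑' P : (SOdd : Set ((ℤ×ℤ)×(ℤ×ℤ))), Eint τ P := by
    rw [← tsum_mul_left]
    refine tsum_congr fun P => ?_
    have hodd : Odd (sg (P:((ℤ×ℤ)×(ℤ×ℤ)))) := P.2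
    rw [hodd.neg_one_zpow]
    ring
  -- θ1^4 split and bijections
  have hsplit : (∑' P : (SOdd : Set ((ℤ×ℤ)×(ℤ×ℤ))), Ehalf τ P)
      + (∑' P : (SOddᶜ : Set ((ℤ×ℤ)×(ℤ×ℤ))), Ehalf τ P)
      = ∑' P : (ℤ×ℤ)×(ℤ×ℤ), Ehalf τ P :=
    Summable.tsum_add_tsum_compl (hEH.subtype _) (hEH.subtype _)
  have hswap : (∑' P : (SOddᶜ : Set ((ℤ×ℤ)×(ℤ×ℤ))), Ehalf τ P)
      = ∑' P : (SOdd : Set ((ℤ×ℤ)×(ℤ×ℤ))), Ehalf τ P := by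
    rw [← psiEquiv.tsum_eq (fun P : (SOdd : Set ((ℤ×ℤ)×(ℤ×ℤ))) => Ehalf τ P)]
    refine tsum_congr fun P => ?_
    obtain ⟨⟨⟨a, b⟩, ⟨c, d⟩⟩, h⟩ := P
    show Ehalf τ ((a,b),(c,d)) = Ehalf τ ((a,b),(c,-d-1))
    rw [Ehalf, Ehalf]
    congr 1
    push_cast
    ring
  have hbij : (∑' P : (SOdd : Set ((ℤ×ℤ)×(ℤ×ℤ))), Eint τ P)
      = ∑' P : (SOddᶜ : Set ((ℤ×ℤ)×(ℤ×ℤ))), Ehalf τ P := by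
    rw [← phiEquiv.tsum_eq (fun P : (SOdd : Set ((ℤ×ℤ)×(ℤ×ℤ))) => Eint τ P)]
    refine tsum_congr fun P => ?_
    obtain ⟨⟨⟨a, b⟩, ⟨c, d⟩⟩, h⟩ := P
    have h' : ¬ Odd (a + b + c + d) := by
      simpa only [SOdd, sg, Set.mem_compl_iff, Set.mem_setOf_eq] using h
    show Eint τ (((a+b+c+d+2)/2, (a+b-c-d)/2), ((a-b+c-d)/2, (a-b-c+d)/2))
      = Ehalf τ ((a,b),(c,d))
    rw [Eint, Ehalf]
    congr 1
    rw [mul_eq_mul_left_iff]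
    left
    exact phi_arg h'
  -- assemble
  have final : theta3 τ ^ 4 - theta2 τ ^ 4 = theta1 τ ^ 4 := by
    rw [key1, key2, key3, hbij, h1, ← hsplit, ← hswap, two_mul]
  linear_combination final
end

section
/- The theta constants satisfy the duplication formula θ1(2τ)·θ3(2τ) = θ1(τ)^2 / 2 for all τ in the upper half plane, where θ1(τ) = ∑_{n∈ℤ} e^{πiτ(n+1/2)^2} and θ3(τ) = ∑_{n∈ℤ} e^{πiτ n^2}. -/
open Complex

lemma summable_theta1_term {σ : ℂ} (h : 0 < σ.im) :
    Summable fun n : ℤ => Complex.exp (Real.pi * I * σ * ((n : ℂ) + 1/2) ^ 2) := by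
  have hs := (summable_jacobiTheta₂_term_iff (σ/2) σ).mpr h
  refine (hs.mul_left (Complex.exp (Real.pi * I * σ / 4))).congr fun n => ?_
  rw [jacobiTheta₂_term, ← Complex.exp_add]
  congr 1
  ring

lemma summable_theta3_term {σ : ℂ} (h : 0 < σ.im) :
    Summable fun n : ℤ => Complex.exp (Real.pi * I * σ * (n : ℂ) ^ 2) := by
  have hs := (summable_jacobiTheta₂_term_iff 0 σ).mpr h
  refine hs.congr fun n => ?_
  rw [jacobiTheta₂_term]
  congr 1
  ring

/-- Duplication formula `θ1(2τ) θ3(2τ) = θ1(τ)^2 / 2`. -/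
theorem theta1_theta3_duplication (τ : ℂ) (hτ : 0 < τ.im) :
    theta1 (2 * τ) * theta3 (2 * τ) = theta1 τ ^ 2 / 2 := by
  have h2τ : 0 < (2 * τ).im := by simp [Complex.mul_im]; linarith
  set f : ℤ → ℂ := fun n => Complex.exp (Real.pi * I * τ * ((n : ℂ) + 1/2) ^ 2) with hf_def
  set g1 : ℤ → ℂ := fun a => Complex.exp (Real.pi * I * (2 * τ) * ((a : ℂ) + 1/2) ^ 2) with hg1_def
  set g3 : ℤ → ℂ := fun b => Complex.exp (Real.pi * I * (2 * τ) * (b : ℂ) ^ 2) with hg3_def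
  have hf : Summable f := summable_theta1_term hτ
  have hg1 : Summable g1 := summable_theta1_term h2τ
  have hg3 : Summable g3 := summable_theta3_term h2τ
  -- product summability
  have hFsum : Summable fun p : ℤ × ℤ => f p.1 * f p.2 :=
    summable_mul_of_summable_norm (summable_norm_iff.mpr hf) (summable_norm_iff.mpr hf)
  have hGsum : Summable fun p : ℤ × ℤ => g1 p.1 * g3 p.2 :=
    summable_mul_of_summable_norm (summable_norm_iff.mpr hg1) (summable_norm_iff.mpr hg3)
  set P : ℂ := theta1 (2 * τ) * theta3 (2 * τ) with hP
  have hG : HasSum (fun p : ℤ × ℤ => g1 p.1 * g3 p.2) P :=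
    hg1.hasSum.mul hg3.hasSum hGsum
  have hF : HasSum (fun p : ℤ × ℤ => f p.1 * f p.2) (theta1 τ * theta1 τ) :=
    hf.hasSum.mul hf.hasSum hFsum
  -- the two indicator pieces
  classical
  set F₁ : ℤ × ℤ → ℂ := fun p => if Even (p.1 - p.2) then f p.1 * f p.2 else 0 with hF₁
  set F₂ : ℤ × ℤ → ℂ := fun p => if Even (p.1 - p.2) then 0 else f p.1 * f p.2 with hF₂
  have j₁inj : Function.Injective (fun q : ℤ × ℤ => ((q.1 + q.2, q.1 - q.2) : ℤ × ℤ)) := by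
    intro a b h
    simp only [Prod.mk.injEq, Prod.ext_iff] at h ⊢
    omega
  have j₂inj : Function.Injective (fun q : ℤ × ℤ => ((q.1 + q.2, q.2 - q.1 - 1) : ℤ × ℤ)) := by
    intro a b h
    simp only [Prod.mk.injEq, Prod.ext_iff] at h ⊢
    omega
  have h₁ : HasSum F₁ P := by
    rw [← j₁inj.hasSum_iff ?_]
    · refine hG.congr_fun fun q => ?_
      have he : Even ((q.1 + q.2) - (q.1 - q.2)) := ⟨q.2, by ring⟩
      simp only [hF₁, Function.comp_apply, he, if_pos]
      rw [hf_def, hg1_def, hg3_def, ← Complex.exp_add, ← Complex.exp_add]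
      congr 1
      push_cast
      ring
    · intro p hp
      show (if Even (p.1 - p.2) then f p.1 * f p.2 else 0) = 0
      rw [if_neg]
      intro ⟨k, hk⟩
      exact hp ⟨(k + p.2, k), by simp only [Prod.ext_iff]; constructor <;> omega⟩
  have h₂ : HasSum F₂ P := by
    rw [← j₂inj.hasSum_iff ?_]
    · refine hG.congr_fun fun q => ?_
      have he : ¬ Even ((q.1 + q.2) - (q.2 - q.1 - 1)) := by
        intro ⟨k, hk⟩
        omega
      simp only [hF₂, Function.comp_apply, he, if_neg, not_false_iff]
      rw [hf_def, hg1_def, hg3_def, ← Complex.exp_add, ← Complex.exp_add]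
      congr 1
      push_cast
      ring
    · intro p hp
      show (if Even (p.1 - p.2) then 0 else f p.1 * f p.2) = 0
      rw [if_pos]
      by_contra hodd
      rw [Int.not_even_iff_odd] at hodd
      obtain ⟨k, hk⟩ := hodd
      exact hp ⟨(k, p.1 - k), by simp only [Prod.ext_iff]; constructor <;> omega⟩
  have hsum : HasSum (fun p : ℤ × ℤ => f p.1 * f p.2) (P + P) := by
    refine (h₁.add h₂).congr_fun fun p => ?_
    by_cases h : Even (p.1 - p.2) <;> simp [hF₁, hF₂, h]
  have := hF.unique hsum
  have : theta1 τ ^ 2 = 2 * P := by rw [sq, this]; ring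
  rw [this]; ring
end
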